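/- In C[Gamma(n)], for a partition M with |M| ≤ n define Delta_n^{M} as the sum over all sequences of |M| pairwise distinct indices of the product of the corresponding disjoint cycles times the product of factors (1 - eps_i) over all |M| indices i involved. Then Delta_n^{M} lies in the center of C[Gamma(n)]. -/

import Mathlib

open scoped BigOperators

/-- A partial bijection of `α`: a partially defined injective map,
encoded as an `Option`-valued function that is injective on its domain. -/
def PartialBij (α : Type*) : Type _ :=
  {f : α → Option α // ∀ x y z : α, f x = some z → f y = some z → x = y}

namespace PartialBij

variable {α : Type*}

/-- Composition: `(g.comp f) x = g (f x)` (product of relations). -/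
def comp (g f : PartialBij α) : PartialBij α :=
  ⟨fun x => (f.1 x).bind g.1, by
    intro x y z hx hy
    rcases Option.bind_eq_some_iff.mp hx with ⟨a, ha, ha'⟩
    rcases Option.bind_eq_some_iff.mp hy with ⟨b, hb, hb'⟩
    have hab : a = b := g.2 _ _ _ ha' hb'
    subst hab
    exact f.2 _ _ _ ha hb⟩

instance : Monoid (PartialBij α) where
  mul := comp
  one := ⟨fun x => some x, fun x y z hx hy =>
    (Option.some_inj.mp hx).trans (Option.some_inj.mp hy).symm⟩
  mul_assoc a b c := Subtype.ext <| funext fun x => (Option.bind_assoc _ _ _).symm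
  one_mul a := Subtype.ext <| funext fun x => by
    show (a.1 x).bind some = a.1 x
    cases a.1 x <;> rfl
  mul_one a := Subtype.ext <| funext fun x => rfl

theorem mul_def (g f : PartialBij α) (x : α) : (g * f).1 x = (f.1 x).bind g.1 := rfl

theorem one_def (x : α) : (1 : PartialBij α).1 x = some x := rfl

/-- The domain of a partial bijection. -/
def dom (f : PartialBij α) : Set α := {x | f.1 x ≠ none}

/-- The range of a partial bijection. -/
def ran (f : PartialBij α) : Set α := {y | ∃ x, f.1 x = some y}

open Classical in
/-- The inverse partial bijection `γ*`. -/
noncomputable def inv (f : PartialBij α) : PartialBij α :=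
  ⟨fun y => if h : ∃ x, f.1 x = some y then some h.choose else none, by
    intro a b z ha hb
    dsimp only at ha hb
    by_cases h1 : ∃ x, f.1 x = some a
    · by_cases h2 : ∃ x, f.1 x = some b
      · rw [dif_pos h1] at ha
        rw [dif_pos h2] at hb
        have ha' := h1.choose_spec
        have hb' := h2.choose_spec
        rw [Option.some_inj.mp ha] at ha'
        rw [Option.some_inj.mp hb] at hb'
        exact Option.some_inj.mp (ha'.symm.trans hb')
      · rw [dif_neg h2] at hb
        exact absurd hb (by simp)
    · rw [dif_neg h1] at ha
      exact absurd ha (by simp)⟩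

open Classical in
/-- The identity bijection `1_Y` of a subset `Y ⊆ α`. -/
noncomputable def idOn (Y : Set α) : PartialBij α :=
  ⟨fun x => if x ∈ Y then some x else none, by
    intro x y z hx hy
    dsimp only at hx hy
    split_ifs at hx hy
    exact (Option.some_inj.mp hx).trans (Option.some_inj.mp hy).symm⟩

/-- A permutation regarded as a (total) partial bijection. -/
def ofPerm (s : Equiv.Perm α) : PartialBij α :=
  ⟨fun x => some (s x), fun x y z hx hy =>
    s.injective ((Option.some_inj.mp hx).trans (Option.some_inj.mp hy).symm)⟩

/-- The idempotent `ε_k`: the identity bijection of `α \ {k}`. -/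
def eps [DecidableEq α] (k : α) : PartialBij α :=
  ⟨fun x => if x = k then none else some x, by
    intro x y z hx hy
    dsimp only at hx hy
    split_ifs at hx hy
    exact (Option.some_inj.mp hx).trans (Option.some_inj.mp hy).symm⟩

/-- `deg γ`: the number of points which are not fixed points of `γ`. -/
def deg {n : ℕ} (f : PartialBij (Fin n)) : ℕ :=
  (Finset.univ.filter fun i : Fin n => f.1 i ≠ some i).card

/-- `deg_m γ`: the number of points in `{m+1,…,n}` (0-indexed: indices `≥ m`)
which are not fixed points of `γ`. -/
def degm {n : ℕ} (m : ℕ) (f : PartialBij (Fin n)) : ℕ :=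
  (Finset.univ.filter fun i : Fin n => m ≤ i.val ∧ f.1 i ≠ some i).card

/-- The rank of a partial bijection: the cardinality of its domain. -/
def rank {n : ℕ} (f : PartialBij (Fin n)) : ℕ :=
  (Finset.univ.filter fun i : Fin n => f.1 i ≠ none).card

end PartialBij

namespace PartialBij

/-- The upper-left `n × n` corner of a partial bijection of `{1,…,n+1}`. -/
def corner {n : ℕ} (γ : PartialBij (Fin (n + 1))) : PartialBij (Fin n) :=
  ⟨fun i => (γ.1 i.castSucc).bind fun j => if h : j.val < n then some ⟨j.val, h⟩ else none, by
    intro x y z hx hy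
    dsimp only at hx hy
    rcases Option.bind_eq_some_iff.mp hx with ⟨a, ha, ha'⟩
    rcases Option.bind_eq_some_iff.mp hy with ⟨b, hb, hb'⟩
    have haz : a = z.castSucc := by
      by_cases h : a.val < n
      · rw [dif_pos h] at ha'
        have := Option.some_inj.mp ha'
        apply Fin.ext
        rw [← this]
        simp
      · rw [dif_neg h] at ha'
        exact absurd ha' (by simp)
    have hbz : b = z.castSucc := by
      by_cases h : b.val < n
      · rw [dif_pos h] at hb'
        have := Option.some_inj.mp hb'
        apply Fin.ext
        rw [← this]
        simp
      · rw [dif_neg h] at hb'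
        exact absurd hb' (by simp)
    subst haz
    rw [hbz] at hb
    exact Fin.castSucc_injective n (γ.2 _ _ _ ha hb)⟩

/-- The `0`-embedding `ψ : Γ(n) → Γ(n+1)` (extension by zero). -/
def extend0 {n : ℕ} (γ : PartialBij (Fin n)) : PartialBij (Fin (n + 1)) :=
  ⟨fun i => if h : i.val < n then (γ.1 ⟨i.val, h⟩).map Fin.castSucc else none, by
    intro x y z hx hy
    dsimp only at hx hy
    by_cases h1 : x.val < n
    · by_cases h2 : y.val < n
      · rw [dif_pos h1] at hx
        rw [dif_pos h2] at hy
        rcases Option.map_eq_some_iff.mp hx with ⟨a, ha, ha'⟩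
        rcases Option.map_eq_some_iff.mp hy with ⟨b, hb, hb'⟩
        have hab : a = b := Fin.castSucc_injective n (ha'.trans hb'.symm)
        subst hab
        have := γ.2 _ _ _ ha hb
        exact Fin.ext (by simpa using congrArg Fin.val this)
      · rw [dif_neg h2] at hy
        exact absurd hy (by simp)
    · rw [dif_neg h1] at hx
      exact absurd hx (by simp)⟩

/-- `θ_{n+1} : C[Γ(n+1)] → C[Γ(n)]`, the linear map striking the last
row and column of the monomial matrices. -/
noncomputable def theta (n : ℕ) (a : MonoidAlgebra ℂ (PartialBij (Fin (n + 1)))) :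
    MonoidAlgebra ℂ (PartialBij (Fin n)) :=
  MonoidAlgebra.ofCoeff (Finsupp.mapDomain corner a.coeff)

/-- The image of `Γ_m(n)` (partial bijections fixing each of the first `m` points)
inside the semigroup algebra `C[Γ(n)]`. -/
def Gset (m n : ℕ) : Set (MonoidAlgebra ℂ (PartialBij (Fin n))) :=
  {x | ∃ γ : PartialBij (Fin n), (∀ i : Fin n, i.val < m → γ.1 i = some i) ∧
    x = MonoidAlgebra.single γ 1}

end PartialBij

/-- Concatenation of compositions (the partition `M ∪ L`). -/
def Composition.app {a b : ℕ} (c₁ : Composition a) (c₂ : Composition b) :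
    Composition (a + b) :=
  ⟨c₁.blocks ++ c₂.blocks,
   fun {i} hi => (List.mem_append.mp hi).elim (fun h => c₁.blocks_pos h)
     (fun h => c₂.blocks_pos h),
   by rw [List.sum_append, c₁.blocks_sum, c₂.blocks_sum]⟩

/-- `c_n^{M}` for a partition (composition) `M = (M_1,…,M_r)`:
the sum over all sequences of `|M|` pairwise distinct indices of the
product of the disjoint cycles of lengths `M_1,…,M_r`. -/
noncomputable def cElt (n : ℕ) {N : ℕ} (c : Composition N) :
    MonoidAlgebra ℂ (Equiv.Perm (Fin n)) :=
  ∑ w : Fin N ↪ Fin n,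
    MonoidAlgebra.single ((((List.ofFn ⇑w).splitWrtComposition c).map List.formPerm).prod) 1

/-- `c_n^{M}` for a partition `M` of `n`. -/
noncomputable def cPart (n : ℕ) (p : Nat.Partition n) :
    MonoidAlgebra ℂ (Equiv.Perm (Fin n)) :=
  cElt n ⟨p.parts.toList,
    fun {i} hi => p.parts_pos (Multiset.mem_toList.mp hi),
    by rw [Multiset.sum_toList]⟩

/-- `Δ_n^{M}` in `C[Γ(n)]`. -/
noncomputable def Delta (n : ℕ) {N : ℕ} (c : Composition N) :
    MonoidAlgebra ℂ (PartialBij (Fin n)) :=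
  ∑ w : Fin N ↪ Fin n,
    MonoidAlgebra.single
      (PartialBij.ofPerm ((((List.ofFn ⇑w).splitWrtComposition c).map List.formPerm).prod)) 1
    * (List.ofFn fun a : Fin N =>
        (1 - MonoidAlgebra.single (PartialBij.eps (w a)) (1 : ℂ))).prod


/-!
The monoid of partial bijections of a finite set is generated by the permutations and the
idempotents `ε_i`: a partial bijection `γ` undefined at `i` equals `γ' ε_i`, where `γ'` extends
`γ` by sending `i` to a point outside its range. So it suffices that `Δ` commutes with both kinds
of generators. Conjugation by a permutation `σ` maps the summand indexed by `w` to the one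
indexed by `σ ∘ w`. For `ε_x`, note that the cycle product `p` of a summand moves only the indices
of `w`: either `x` is not among them, and then `ε_x` commutes with every factor, or `x` and
`p⁻¹ x` both are, and then `ε_x` kills the summand from both sides since `ε_i (1 - ε_i) = 0`.
-/
namespace PartialBij

variable {α : Type*}

@[ext]
theorem ext {f g : PartialBij α} (h : ∀ x, f.1 x = g.1 x) : f = g :=
  Subtype.ext (funext h)

theorem ofPerm_apply (σ : Equiv.Perm α) (x : α) : (ofPerm σ).1 x = some (σ x) := rfl

theorem ofPerm_mul (σ τ : Equiv.Perm α) : ofPerm (σ * τ) = ofPerm σ * ofPerm τ := rfl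

section Eps

variable [DecidableEq α]

theorem eps_apply (i x : α) : (eps i).1 x = if x = i then none else some x := rfl

theorem eps_mul_self (i : α) : eps i * eps i = eps i := by
  ext x : 1
  by_cases hx : x = i <;> simp [mul_def, eps_apply, hx]

theorem commute_eps (i j : α) : Commute (eps i) (eps j) := by
  ext x : 1
  by_cases hi : x = i <;> by_cases hj : x = j <;> simp_all [mul_def, eps_apply]

theorem semiconjBy_ofPerm_eps (σ : Equiv.Perm α) (i : α) :
    SemiconjBy (ofPerm σ) (eps i) (eps (σ i)) := by
  ext x : 1
  by_cases hx : x = i <;> simp [mul_def, eps_apply, ofPerm_apply, hx]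

end Eps

theorem exists_ofPerm_eq [Finite α] {γ : PartialBij α} (hγ : ∀ x, γ.1 x ≠ none) :
    ∃ σ : Equiv.Perm α, ofPerm σ = γ := by
  choose f hf using fun x => Option.ne_none_iff_exists'.mp (hγ x)
  have hinj : Function.Injective f := fun x y hxy => γ.2 x y (f y) (hxy ▸ hf x) (hf y)
  exact ⟨Equiv.ofBijective f (Finite.injective_iff_bijective.mp hinj), ext fun x => (hf x).symm⟩

theorem exists_notMem_ran [Finite α] {γ : PartialBij α} {i : α} (hi : γ.1 i = none) :
    ∃ v, v ∉ γ.ran := by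
  by_contra! hran
  choose f hf using hran
  have hinj : Function.Injective f := fun v v' hvv' =>
    Option.some_inj.mp ((hf v).symm.trans (hvv' ▸ hf v'))
  obtain ⟨v, hv⟩ := Finite.injective_iff_surjective.mp hinj i
  simpa [hv, hi] using hf v

theorem exists_eq_mul_eps [Finite α] [DecidableEq α] {γ : PartialBij α} {i : α}
    (hi : γ.1 i = none) :
    ∃ γ' : PartialBij α, γ'.1 i ≠ none ∧ (∀ x ≠ i, γ'.1 x = γ.1 x) ∧ γ = γ' * eps i := by
  obtain ⟨v, hv⟩ := exists_notMem_ran hi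
  have hv' : ∀ x, γ.1 x ≠ some v := fun x hx => hv ⟨x, hx⟩
  let γ' : PartialBij α := ⟨fun x => if x = i then some v else γ.1 x, by
    intro x y z hx hy
    dsimp only at hx hy
    split_ifs at hx hy with h1 h2 h2
    · rw [h1, h2]
    · exact absurd (hy.trans (Option.some_inj.mp hx ▸ rfl)) (hv' y)
    · exact absurd (hx.trans (Option.some_inj.mp hy ▸ rfl)) (hv' x)
    · exact γ.2 x y z hx hy⟩
  refine ⟨γ', by simp [γ'], fun x hx => if_neg hx, ext fun x => ?_⟩
  rw [mul_def, eps_apply]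
  by_cases hx : x = i
  · simp [hx, hi]
  · simp [γ', hx]

theorem closure_range_ofPerm_union_range_eps [Finite α] [DecidableEq α] :
    Submonoid.closure (Set.range (ofPerm (α := α)) ∪ Set.range eps) = ⊤ := by
  have := Fintype.ofFinite α
  refine eq_top_iff.mpr fun γ _ => ?_
  suffices ∀ s : Finset α, ∀ γ : PartialBij α, (∀ x, γ.1 x = none → x ∈ s) →
      γ ∈ Submonoid.closure (Set.range ofPerm ∪ Set.range eps) from
    this Finset.univ γ fun x _ => Finset.mem_univ x
  intro s
  induction s using Finset.induction_on with
  | empty =>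
    intro γ hγ
    obtain ⟨σ, rfl⟩ := exists_ofPerm_eq fun x hx => Finset.notMem_empty x (hγ x hx)
    exact Submonoid.subset_closure (Or.inl ⟨σ, rfl⟩)
  | insert a s _ ih =>
    intro γ hγ
    by_cases hγa : γ.1 a = none
    · obtain ⟨γ', hγ'a, hγ'γ, rfl⟩ := exists_eq_mul_eps hγa
      refine Submonoid.mul_mem _ (ih γ' fun x hx => ?_)
        (Submonoid.subset_closure (Or.inr ⟨a, rfl⟩))
      have hxa : x ≠ a := by rintro rfl; exact hγ'a hx
      exact (Finset.mem_insert.mp (hγ x ((hγ'γ x hxa).symm.trans hx))).resolve_left hxa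
    · exact ih γ fun x hx =>
        (Finset.mem_insert.mp (hγ x hx)).resolve_left (by rintro rfl; exact hγa hx)

end PartialBij

namespace List

variable {α β : Type*}

theorem splitWrtComposition_map {n : ℕ} (f : α → β) (l : List α) (c : Composition n) :
    (l.map f).splitWrtComposition c = (l.splitWrtComposition c).map (map f) := by
  unfold splitWrtComposition
  generalize c.blocks = ns
  induction ns generalizing l with
  | nil => simp [splitWrtCompositionAux]
  | cons m ns ih => simp [splitWrtCompositionAux_cons, ← map_take, ← map_drop, ih]

theorem mem_of_mem_splitWrtComposition {n : ℕ} {l l' : List α} {c : Composition n}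
    (hl : l.length = n) (h : l' ∈ l.splitWrtComposition c) {x : α} (hx : x ∈ l') : x ∈ l :=
  flatten_splitWrtCompositionAux (c.blocks_sum.trans hl.symm) ▸ mem_flatten_of_mem h hx

theorem formPerm_map [DecidableEq α] (σ : Equiv.Perm α) :
    ∀ l : List α, (l.map σ).formPerm = σ * l.formPerm * σ⁻¹
  | [] => by simp
  | [x] => by simp
  | x :: y :: t => by
    rw [map_cons, map_cons, formPerm_cons_cons, ← map_cons, formPerm_map σ (y :: t),
      formPerm_cons_cons, Equiv.swap_apply_apply]
    group

theorem ofFn_smul {N : ℕ} (σ : Equiv.Perm α) (w : Fin N ↪ α) :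
    ofFn (σ • w) = (ofFn w).map σ := by
  rw [map_ofFn]
  rfl

end List

section CyclesPerm

open Equiv

variable {α : Type*} {N : ℕ}

variable [DecidableEq α]

def cyclesPerm (c : Composition N) (w : Fin N ↪ α) : Perm α :=
  (((List.ofFn w).splitWrtComposition c).map List.formPerm).prod

theorem cyclesPerm_apply_of_notMem {c : Composition N} {w : Fin N ↪ α} {x : α}
    (hx : x ∉ List.ofFn w) : cyclesPerm c w x = x := by
  suffices cyclesPerm c w ∈ MulAction.stabilizer (Perm α) x from this
  refine (MulAction.stabilizer _ x).list_prod_mem fun p hp => ?_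
  obtain ⟨l', hl', rfl⟩ := List.mem_map.mp hp
  exact List.formPerm_apply_of_notMem fun h =>
    hx (List.mem_of_mem_splitWrtComposition List.length_ofFn hl' h)

theorem cyclesPerm_apply_mem {c : Composition N} {w : Fin N ↪ α} {x : α}
    (hx : x ∈ List.ofFn w) : cyclesPerm c w x ∈ List.ofFn w := by
  by_contra h
  have hfix : cyclesPerm c w x = x := (cyclesPerm c w).injective (cyclesPerm_apply_of_notMem h)
  rw [hfix] at h
  exact h hx

theorem cyclesPerm_smul (σ : Perm α) (c : Composition N) (w : Fin N ↪ α) :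
    cyclesPerm c (σ • w) = σ * cyclesPerm c w * σ⁻¹ := by
  rw [cyclesPerm, List.ofFn_smul, List.splitWrtComposition_map, List.map_map]
  have : List.formPerm ∘ List.map σ = MulAut.conj σ ∘ List.formPerm :=
    funext (List.formPerm_map σ)
  rw [this, ← List.map_map, ← map_list_prod]
  rfl

end CyclesPerm

theorem MonoidAlgebra.mem_center_of_commute_of {k M : Type*} [CommSemiring k] [Monoid M]
    {s : Set M} (hs : Submonoid.closure s = ⊤) {x : MonoidAlgebra k M}
    (h : ∀ m ∈ s, Commute (of k M m) x) : x ∈ Subalgebra.center k (MonoidAlgebra k M) := by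
  have hof : ∀ m, Commute (of k M m) x := fun m =>
    Submonoid.closure_induction (motive := fun m _ => Commute (of k M m) x) h
      (by simp)
      (fun a b _ _ ha hb => by simpa using ha.mul_left hb)
      (hs ▸ Submonoid.mem_top m)
  rw [Subalgebra.mem_center_iff]
  intro b
  induction b using MonoidAlgebra.induction_on with
  | of m => exact hof m
  | add a b ha hb => exact Commute.add_left ha hb
  | smul r a ha => exact Commute.smul_left ha r

section DeltaSum

open PartialBij MonoidAlgebra Equiv

variable (k : Type*) {α : Type*} [DecidableEq α]

section Ring

variable [Ring k]

noncomputable def prodOneSubEps (l : List α) : MonoidAlgebra k (PartialBij α) :=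
  (l.map fun i => 1 - of k _ (eps i)).prod

variable {k}

theorem commute_of_eps_prodOneSubEps (i : α) (l : List α) :
    Commute (of k _ (eps i)) (prodOneSubEps k l) :=
  Commute.list_prod_right _ _ fun _ hy => by
    obtain ⟨j, _, rfl⟩ := List.mem_map.mp hy
    exact (Commute.one_right _).sub_right ((commute_eps i j).map (of k _))

theorem of_eps_mul_prodOneSubEps_of_mem {i : α} {l : List α} (hi : i ∈ l) :
    of k _ (eps i) * prodOneSubEps k l = 0 := by
  induction l with
  | nil => exact absurd hi List.not_mem_nil
  | cons j t ih =>
    rw [prodOneSubEps, List.map_cons, List.prod_cons, ← mul_assoc]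
    rcases List.mem_cons.mp hi with rfl | hi
    · rw [mul_sub, mul_one, ← map_mul, eps_mul_self, sub_self, zero_mul]
    · rw [((Commute.one_right _).sub_right ((commute_eps i j).map (of k _))).eq, mul_assoc]
      rw [← prodOneSubEps, ih hi, mul_zero]

theorem semiconjBy_of_ofPerm_prodOneSubEps (σ : Perm α) (l : List α) :
    SemiconjBy (of k _ (ofPerm σ)) (prodOneSubEps k l) (prodOneSubEps k (l.map σ)) := by
  induction l with
  | nil => exact SemiconjBy.one_right _
  | cons i t ih =>
    refine SemiconjBy.mul_right ?_ ih
    refine (SemiconjBy.one_right _).sub_right ?_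
    exact (semiconjBy_ofPerm_eps σ i).map (of k _)

variable {N : ℕ}

variable (k) in
noncomputable def deltaTerm (c : Composition N) (w : Fin N ↪ α) :
    MonoidAlgebra k (PartialBij α) :=
  of k _ (ofPerm (cyclesPerm c w)) * prodOneSubEps k (List.ofFn w)

theorem commute_of_eps_deltaTerm (x : α) (c : Composition N) (w : Fin N ↪ α) :
    Commute (of k _ (eps x)) (deltaTerm k c w) := by
  obtain ⟨j, rfl⟩ := (cyclesPerm c w).surjective x
  have hp : of k _ (eps (cyclesPerm c w j)) * of k _ (ofPerm (cyclesPerm c w)) =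
      of k _ (ofPerm (cyclesPerm c w)) * of k _ (eps j) :=
    ((semiconjBy_ofPerm_eps _ j).map (of k _)).symm
  by_cases hj : j ∈ List.ofFn w
  · change _ * (_ * _) = (_ * _) * _
    rw [← mul_assoc, hp, mul_assoc, of_eps_mul_prodOneSubEps_of_mem hj, mul_assoc,
      ← (commute_of_eps_prodOneSubEps _ _).eq, of_eps_mul_prodOneSubEps_of_mem
      (cyclesPerm_apply_mem hj), mul_zero]
  · rw [cyclesPerm_apply_of_notMem hj] at hp ⊢
    exact Commute.mul_right hp (commute_of_eps_prodOneSubEps _ _)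

theorem semiconjBy_of_ofPerm_deltaTerm (σ : Perm α) (c : Composition N) (w : Fin N ↪ α) :
    SemiconjBy (of k _ (ofPerm σ)) (deltaTerm k c w) (deltaTerm k c (σ • w)) := by
  have hconj :
      SemiconjBy (ofPerm σ) (ofPerm (cyclesPerm c w)) (ofPerm (cyclesPerm c (σ • w))) := by
    rw [SemiconjBy, cyclesPerm_smul, ← ofPerm_mul, ← ofPerm_mul, inv_mul_cancel_right]
  rw [deltaTerm, deltaTerm, List.ofFn_smul]
  exact (hconj.map (of k _)).mul_right (semiconjBy_of_ofPerm_prodOneSubEps σ _)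

variable (k) in
noncomputable def deltaSum [Fintype α] (c : Composition N) : MonoidAlgebra k (PartialBij α) :=
  ∑ w : Fin N ↪ α, deltaTerm k c w

variable [Fintype α]

theorem commute_of_ofPerm_deltaSum (σ : Perm α) (c : Composition N) :
    Commute (of k _ (ofPerm σ)) (deltaSum k c) := by
  rw [Commute, SemiconjBy, deltaSum, Finset.mul_sum, Finset.sum_mul]
  calc ∑ w : Fin N ↪ α, of k _ (ofPerm σ) * deltaTerm k c w
      = ∑ w : Fin N ↪ α, deltaTerm k c (σ • w) * of k _ (ofPerm σ) :=
        Finset.sum_congr rfl fun w _ => semiconjBy_of_ofPerm_deltaTerm σ c w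
    _ = ∑ w : Fin N ↪ α, deltaTerm k c w * of k _ (ofPerm σ) :=
        Equiv.sum_comp (MulAction.toPerm σ) fun w => deltaTerm k c w * of k _ (ofPerm σ)

end Ring

theorem deltaSum_mem_center [CommRing k] [Fintype α] {N : ℕ} (c : Composition N) :
    deltaSum k c ∈ Subalgebra.center k (MonoidAlgebra k (PartialBij α)) := by
  refine mem_center_of_commute_of closure_range_ofPerm_union_range_eps ?_
  rintro _ (⟨σ, rfl⟩ | ⟨x, rfl⟩)
  · exact commute_of_ofPerm_deltaSum σ c
  · exact Commute.sum_right _ _ _ fun w _ => commute_of_eps_deltaTerm x c w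

end DeltaSum

theorem Delta_eq_deltaSum (n : ℕ) {N : ℕ} (c : Composition N) :
    Delta n c = deltaSum ℂ c := by
  refine Finset.sum_congr rfl fun w _ => ?_
  rw [deltaTerm, prodOneSubEps, List.map_ofFn]
  rfl

theorem Delta_mem_center_general (n : ℕ) {N : ℕ} (M : Composition N) :
    Delta n M ∈ Subalgebra.center ℂ (MonoidAlgebra ℂ (PartialBij (Fin n))) :=
  Delta_eq_deltaSum n M ▸ deltaSum_mem_center ℂ M

/-- `Δ_n^{M}` lies in the center of `C[Γ(n)]`. -/
theorem Delta_mem_center (n : ℕ) {N : ℕ} (M : Composition N) (h : N ≤ n) :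
    Delta n M ∈ Subalgebra.center ℂ (MonoidAlgebra ℂ (PartialBij (Fin n))) :=
  Delta_mem_center_general n M
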